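/- arXiv:2111.14008 — 2 statements merged into one kernel-verified Lean document; each statement's English description precedes it below -/
import Mathlib

section
/- Let H be a real inner product space and let k range over a nonempty finite index set with weights p_k ≥ 0, ∑_k p_k = 1. Let G ≥ 0, let E ≥ 1 and t₀ ≤ t be integers with t − t₀ + 1 ≤ E, and let η : {t₀, …, t} → ℝ be positive and nonincreasing with η(t₀) ≤ 2η(t). Let θ₀ ∈ H, and for each k and each i ∈ {t₀, …, t} let g_{k,i} ∈ H with ‖g_{k,i}‖ ≤ G. Set v_k = θ₀ − ∑_{i=t₀}^{t} η(i) g_{k,i} and v̄ = ∑_k p_k v_k. Then ∑_k p_k ‖v_k − v̄‖² ≤ 4 E² η(t)² G². -/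
/-!
The weighted mean minimises the weighted mean squared distance, so the spread of the `v k` about
`v̄` is at most their spread about the common starting point `θ₀`. Each `v k - θ₀` is a sum of at
most `E` steps, each of length at most `η t₀ * G ≤ 2 * η t * G`.
-/

open Finset

section WeightedSpread

variable {H : Type*} [NormedAddCommGroup H] [InnerProductSpace ℝ H] {ι : Type*}

theorem sum_mul_norm_sub_sq_eq_add_norm_wmean_sub_sq (s : Finset ι) (p : ι → ℝ)
    (hp1 : ∑ k ∈ s, p k = 1) (v : ι → H) (c : H) :
    ∑ k ∈ s, p k * ‖v k - c‖ ^ 2 =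
      ∑ k ∈ s, p k * ‖v k - ∑ j ∈ s, p j • v j‖ ^ 2 + ‖∑ j ∈ s, p j • v j - c‖ ^ 2 := by
  generalize hm : ∑ j ∈ s, p j • v j = m
  have hcross : ∑ k ∈ s, p k * inner ℝ (v k - m) (m - c) = 0 := by
    simp only [← real_inner_smul_left, ← sum_inner, smul_sub, sum_sub_distrib, ← sum_smul,
      hp1, one_smul, hm, sub_self, inner_zero_left]
  have hsplit : ∀ k,
      ‖v k - c‖ ^ 2 = ‖v k - m‖ ^ 2 + 2 * inner ℝ (v k - m) (m - c) + ‖m - c‖ ^ 2 := fun k => by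
    rw [← norm_add_sq_real, sub_add_sub_cancel]
  simp only [hsplit, mul_add, sum_add_distrib, ← sum_mul, hp1, one_mul, mul_left_comm _ (2 : ℝ),
    ← mul_sum, hcross, mul_zero, add_zero]

theorem sum_mul_norm_sub_wmean_sq_le (s : Finset ι) (p : ι → ℝ)
    (hp1 : ∑ k ∈ s, p k = 1) (v : ι → H) (c : H) :
    ∑ k ∈ s, p k * ‖v k - ∑ j ∈ s, p j • v j‖ ^ 2 ≤ ∑ k ∈ s, p k * ‖v k - c‖ ^ 2 := by
  rw [sum_mul_norm_sub_sq_eq_add_norm_wmean_sub_sq s p hp1 v c]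
  exact le_add_of_nonneg_right (by positivity)

end WeightedSpread

theorem norm_sum_smul_le_card_mul {H : Type*} [SeminormedAddCommGroup H] [NormedSpace ℝ H]
    {ι : Type*} (s : Finset ι) (η : ι → ℝ) (g : ι → H) {M G : ℝ}
    (hη : ∀ i ∈ s, |η i| ≤ M) (hg : ∀ i ∈ s, ‖g i‖ ≤ G) :
    ‖∑ i ∈ s, η i • g i‖ ≤ #s * (M * G) := by
  refine (norm_sum_le _ _).trans ?_
  refine (sum_le_card_nsmul s _ _ fun i hi => ?_).trans (nsmul_eq_mul _ _).le
  rw [norm_smul, Real.norm_eq_abs]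
  exact mul_le_mul (hη i hi) (hg i hi) (norm_nonneg _) ((abs_nonneg _).trans (hη i hi))

theorem stmt_4_general {H : Type*} [NormedAddCommGroup H] [InnerProductSpace ℝ H]
    {ι : Type*} [Fintype ι]
    (p : ι → ℝ) (hp : ∀ k, 0 ≤ p k) (hp1 : ∑ k, p k = 1)
    (G : ℝ) (E t₀ t : ℕ)
    (hEt : t - t₀ + 1 ≤ E)
    (η : ℕ → ℝ) (hηpos : ∀ i, t₀ ≤ i → i ≤ t → 0 < η i)
    (hηmono : ∀ i j, t₀ ≤ i → i ≤ j → j ≤ t → η j ≤ η i)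
    (hη2 : η t₀ ≤ 2 * η t)
    (θ₀ : H) (g : ι → ℕ → H) (hg : ∀ k i, t₀ ≤ i → i ≤ t → ‖g k i‖ ≤ G)
    (v : ι → H) (hv : ∀ k, v k = θ₀ - ∑ i ∈ Finset.Icc t₀ t, η i • g k i) :
    ∑ k, p k * ‖v k - ∑ j, p j • v j‖ ^ 2 ≤
      4 * (E : ℝ) ^ 2 * (η t) ^ 2 * G ^ 2 := by
  have hrate : ∀ i ∈ Icc t₀ t, |η i| ≤ 2 * η t := fun i hi => by
    obtain ⟨hi₀, hit⟩ := mem_Icc.mp hi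
    rw [abs_of_pos (hηpos i hi₀ hit)]
    exact (hηmono t₀ i le_rfl hi₀ hit).trans hη2
  have hcard : (#(Icc t₀ t) : ℝ) ≤ E := by
    rw [Nat.card_Icc]
    exact_mod_cast (by omega : t + 1 - t₀ ≤ E)
  have hdrift : ∀ k, ‖v k - θ₀‖ ^ 2 ≤ (E : ℝ) ^ 2 * (2 * η t * G) ^ 2 := fun k => by
    have h := norm_sum_smul_le_card_mul _ η (g k) hrate fun i hi =>
      hg k i (mem_Icc.mp hi).1 (mem_Icc.mp hi).2
    rw [hv k, sub_sub_cancel_left, norm_neg]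
    calc _ ≤ (#(Icc t₀ t) * (2 * η t * G)) ^ 2 := pow_le_pow_left₀ (norm_nonneg _) h 2
      _ = (#(Icc t₀ t) : ℝ) ^ 2 * (2 * η t * G) ^ 2 := mul_pow ..
      _ ≤ (E : ℝ) ^ 2 * (2 * η t * G) ^ 2 :=
        mul_le_mul_of_nonneg_right (pow_le_pow_left₀ (Nat.cast_nonneg _) hcard 2) (sq_nonneg _)
  calc _ ≤ ∑ k, p k * ‖v k - θ₀‖ ^ 2 := sum_mul_norm_sub_wmean_sq_le _ p hp1 v θ₀
    _ ≤ ∑ k, p k * ((E : ℝ) ^ 2 * (2 * η t * G) ^ 2) :=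
        sum_le_sum fun k _ => mul_le_mul_of_nonneg_left (hdrift k) (hp k)
    _ = 4 * (E : ℝ) ^ 2 * (η t) ^ 2 * G ^ 2 := by rw [← sum_mul, hp1]; ring

theorem stmt_4 {H : Type*} [NormedAddCommGroup H] [InnerProductSpace ℝ H]
    {ι : Type*} [Fintype ι] [Nonempty ι]
    (p : ι → ℝ) (hp : ∀ k, 0 ≤ p k) (hp1 : ∑ k, p k = 1)
    (G : ℝ) (hG : 0 ≤ G) (E t₀ t : ℕ) (hE : 1 ≤ E) (ht₀ : t₀ ≤ t)
    (hEt : t - t₀ + 1 ≤ E)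
    (η : ℕ → ℝ) (hηpos : ∀ i, t₀ ≤ i → i ≤ t → 0 < η i)
    (hηmono : ∀ i j, t₀ ≤ i → i ≤ j → j ≤ t → η j ≤ η i)
    (hη2 : η t₀ ≤ 2 * η t)
    (θ₀ : H) (g : ι → ℕ → H) (hg : ∀ k i, t₀ ≤ i → i ≤ t → ‖g k i‖ ≤ G)
    (v : ι → H) (hv : ∀ k, v k = θ₀ - ∑ i ∈ Finset.Icc t₀ t, η i • g k i) :
    ∑ k, p k * ‖v k - ∑ j, p j • v j‖ ^ 2 ≤
      4 * (E : ℝ) ^ 2 * (η t) ^ 2 * G ^ 2 :=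
  stmt_4_general p hp hp1 G E t₀ t hEt η hηpos hηmono hη2 θ₀ g hg v hv
end

section
/- Let M ≥ 1 be an integer, let b > (3 + √21)/4, α > 0, C ≥ 1, and let 0 < θ_min ≤ θ₁, θ₂, θ₁*, θ₂* ≤ θ_max. Let λ_1, …, λ_M be nonnegative reals satisfying λ_j ≤ C · j^{−2b(2b−1)/(4b+3)} · M^{1+α/2} for every j ∈ {1, …, M}, and set ρ = (2+α)(4b+3)/(4b(2b−1)), S₁₂ = ∑_{j=1}^M λ_j/(θ₁λ_j + θ₂)², S₂₂ = ∑_{j=1}^M 1/(θ₁λ_j + θ₂)², and g₂ = [ (θ₁ − θ₁*)S₁₂ + (θ₂ − θ₂*)S₂₂ ] / (2M). Then g₂ · (θ₂ − θ₂*) ≥ [ (M − C M^ρ)/(8θ_max² M) ] · (θ₂ − θ₂*)² − (θ_max − θ_min)²/(2M) · [ (M^ρ + 1)/θ_min² + C(4b+3)M^ρ/(θ_min²(4b² − 6b − 3)) ]. -/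
/-!
With γ = 2b(2b−1)/(4b+3) and N = M^ρ we have ργ = 1 + α/2, so the eigenvalue bound reads
λ_j ≤ C (N/j)^γ, and b > (3+√21)/4 makes γ > 1. Split S₁₂ at j ≈ N: the first ⌊N⌋+1 terms
are each at most 1/θ_min², and the tail is at most (C N^γ/θ_min²) ∑_{j>N} j^{-γ}
≤ C N/(θ_min²(γ−1)) by comparison with ∫ x^{-γ}. Every j ≥ CN has λ_j ≤ 1, so at least M − CN
terms of S₂₂ are at least 1/(4θ_max²). As (θ₁ − θ₁*)(θ₂ − θ₂*) ≥ −(θ_max − θ_min)², the two bounds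
combine into the claim.
-/

open Finset Real

lemma sum_Ioc_rpow_neg_le {γ : ℝ} (hγ : 1 < γ) {J : ℕ} (hJ : 0 < J) (M : ℕ) :
    ∑ j ∈ Ioc J M, (j : ℝ) ^ (-γ) ≤ (J : ℝ) ^ (1 - γ) / (γ - 1) := by
  have hJ' : (0 : ℝ) < J := by exact_mod_cast hJ
  rcases lt_or_ge M J with hMJ | hJM
  · simpa [Ioc_eq_empty_of_le hMJ.le] using div_nonneg (by positivity) (by linarith)
  have hanti : AntitoneOn (fun x : ℝ => x ^ (-γ)) (Set.Icc (J : ℝ) M) :=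
    (antitoneOn_rpow_Ioi_of_exponent_nonpos (by linarith)).mono
      fun x hx => lt_of_lt_of_le hJ' hx.1
  have hint : ∫ x in (J : ℝ)..M, x ^ (-γ) = ((J : ℝ) ^ (1 - γ) - (M : ℝ) ^ (1 - γ)) / (γ - 1) := by
    have h0 : (0 : ℝ) ∉ Set.uIcc (J : ℝ) M := by
      rw [Set.uIcc_of_le (by exact_mod_cast hJM)]
      exact fun h => not_le.2 hJ' h.1
    have hγ0 : γ - 1 ≠ 0 := by linarith
    have hγ0' : -γ + 1 ≠ 0 := by linarith
    rw [integral_rpow (Or.inr ⟨by linarith, h0⟩)]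
    field_simp
    ring_nf
  calc ∑ j ∈ Ioc J M, (j : ℝ) ^ (-γ)
      = ∑ i ∈ Ico J M, ((i + 1 : ℕ) : ℝ) ^ (-γ) := by
        rw [← Ico_add_one_add_one_eq_Ioc, sum_Ico_add' (fun j : ℕ => (j : ℝ) ^ (-γ))]
    _ ≤ ∫ x in (J : ℝ)..M, x ^ (-γ) := hanti.sum_le_integral_Ico hJM
    _ ≤ (J : ℝ) ^ (1 - γ) / (γ - 1) := by
      rw [hint]
      exact div_le_div_of_nonneg_right (sub_le_self _ (by positivity)) (by linarith)

lemma sum_Icc_le_head_add_tail {f : ℕ → ℝ} {A B γ : ℝ} (hγ : 1 < γ) (hA : 0 ≤ A) (hB : 0 ≤ B)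
    {J M : ℕ} (hJ : 0 < J) (hfA : ∀ j ∈ Icc 1 M, f j ≤ A)
    (hfB : ∀ j ∈ Icc 1 M, f j ≤ B * (j : ℝ) ^ (-γ)) :
    ∑ j ∈ Icc 1 M, f j ≤ J * A + B * ((J : ℝ) ^ (1 - γ) / (γ - 1)) := by
  rw [← sum_filter_add_sum_filter_not (Icc 1 M) (· ≤ J)]
  have hhead : ∑ j ∈ Icc 1 M with j ≤ J, f j ≤ J * A := by
    have hcard : #{j ∈ Icc 1 M | j ≤ J} ≤ J :=
      calc #{j ∈ Icc 1 M | j ≤ J} ≤ #(Icc 1 J) :=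
            card_le_card fun j hj => by simp only [mem_filter, mem_Icc] at hj ⊢; omega
        _ = J := by simp
    calc ∑ j ∈ Icc 1 M with j ≤ J, f j ≤ #{j ∈ Icc 1 M | j ≤ J} • A :=
          sum_le_card_nsmul _ _ _ fun j hj => hfA j (mem_filter.1 hj).1
      _ ≤ J * A := by rw [nsmul_eq_mul]; gcongr
  have htail : ∑ j ∈ Icc 1 M with ¬j ≤ J, f j ≤ B * ((J : ℝ) ^ (1 - γ) / (γ - 1)) := by
    have hIoc : {j ∈ Icc 1 M | ¬j ≤ J} = Ioc J M := by
      ext; simp only [mem_filter, mem_Icc, mem_Ioc]; omega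
    rw [hIoc]
    calc ∑ j ∈ Ioc J M, f j ≤ ∑ j ∈ Ioc J M, B * (j : ℝ) ^ (-γ) :=
          sum_le_sum fun j hj => hfB j (by simp only [mem_Ioc, mem_Icc] at hj ⊢; omega)
      _ ≤ B * ((J : ℝ) ^ (1 - γ) / (γ - 1)) := by
          rw [← mul_sum]; exact mul_le_mul_of_nonneg_left (sum_Ioc_rpow_neg_le hγ hJ M) hB
  exact add_le_add hhead htail

lemma sub_le_card_filter_le {x : ℝ} (hx : 0 ≤ x) (M : ℕ) :
    (M : ℝ) - x ≤ #{j ∈ Icc 1 M | x ≤ ((j : ℕ) : ℝ)} := by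
  have hsmall : (#{j ∈ Icc 1 M | ¬x ≤ ((j : ℕ) : ℝ)} : ℝ) ≤ x :=
    calc (#{j ∈ Icc 1 M | ¬x ≤ ((j : ℕ) : ℝ)} : ℝ) ≤ #(Icc 1 ⌊x⌋₊) := by
          gcongr
          intro j hj
          simp only [mem_filter, mem_Icc, not_le] at hj ⊢
          exact ⟨hj.1.1, Nat.le_floor hj.2.le⟩
      _ ≤ x := by simpa using Nat.floor_le hx
  have hsplit := card_filter_add_card_filter_not (s := Icc 1 M) (fun j : ℕ => x ≤ j)
  simp only [Nat.card_Icc, add_tsub_cancel_right] at hsplit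
  have : (#{j ∈ Icc 1 M | x ≤ ((j : ℕ) : ℝ)} : ℝ) + #{j ∈ Icc 1 M | ¬x ≤ ((j : ℕ) : ℝ)} = M := by
    exact_mod_cast hsplit
  linarith

lemma sub_mul_le_sum_Icc {f : ℕ → ℝ} {x c : ℝ} (hx : 0 ≤ x) (hc : 0 ≤ c) {M : ℕ}
    (hf0 : ∀ j ∈ Icc 1 M, 0 ≤ f j) (hfc : ∀ j ∈ Icc 1 M, x ≤ j → c ≤ f j) :
    ((M : ℝ) - x) * c ≤ ∑ j ∈ Icc 1 M, f j :=
  calc ((M : ℝ) - x) * c ≤ #{j ∈ Icc 1 M | x ≤ ((j : ℕ) : ℝ)} • c := by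
        rw [nsmul_eq_mul]; exact mul_le_mul_of_nonneg_right (sub_le_card_filter_le hx M) hc
    _ ≤ ∑ j ∈ Icc 1 M with x ≤ ((j : ℕ) : ℝ), f j :=
        card_nsmul_le_sum _ _ _ fun j hj => hfc j (mem_filter.1 hj).1 (mem_filter.1 hj).2
    _ ≤ ∑ j ∈ Icc 1 M, f j :=
        sum_le_sum_of_subset_of_nonneg (filter_subset _ _) fun j hj _ => hf0 j hj

lemma div_sq_add_le_one_div_sq {a c m x : ℝ} (hm : 0 < m) (ha : m ≤ a) (hc : m ≤ c)
    (hx : 0 ≤ x) : x / (a * x + c) ^ 2 ≤ 1 / m ^ 2 := by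
  have hlow : m * (x + 1) ≤ a * x + c := by nlinarith
  rw [div_le_div_iff₀ (pow_pos (by nlinarith) 2) (by positivity)]
  nlinarith [pow_le_pow_left₀ (by positivity) hlow 2]

lemma div_sq_add_le_div_sq {a c m x : ℝ} (hm : 0 < m) (ha : 0 ≤ a) (hc : m ≤ c) (hx : 0 ≤ x) :
    x / (a * x + c) ^ 2 ≤ x / m ^ 2 :=
  div_le_div_of_nonneg_left hx (by positivity) (pow_le_pow_left₀ hm.le (by nlinarith) 2)

lemma one_div_four_mul_sq_le {a c θ x : ℝ} (ha0 : 0 ≤ a) (ha : a ≤ θ) (hc0 : 0 < c) (hc : c ≤ θ)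
    (hx0 : 0 ≤ x) (hx1 : x ≤ 1) : 1 / (4 * θ ^ 2) ≤ 1 / (a * x + c) ^ 2 := by
  have hax : a * x ≤ θ := by nlinarith
  apply one_div_le_one_div_of_le (by positivity)
  nlinarith [mul_nonneg ha0 hx0]

lemma mul_rpow_neg_mul_rpow_le_one {C N γ x : ℝ} (hC : 1 ≤ C) (hγ : 1 ≤ γ) (hN : 0 < N)
    (hx : C * N ≤ x) : C * x ^ (-γ) * N ^ γ ≤ 1 := by
  have hx0 : 0 < x := lt_of_lt_of_le (by positivity) hx
  have hNx : N / x ≤ 1 / C := by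
    rw [div_le_div_iff₀ hx0 (by linarith)]; linarith
  have hle : (N / x) ^ γ ≤ 1 / C :=
    calc (N / x) ^ γ ≤ (1 / C) ^ γ := by gcongr
      _ ≤ (1 / C) ^ (1 : ℝ) :=
        rpow_le_rpow_of_exponent_ge (by positivity) (div_le_one_of_le₀ hC (by linarith)) hγ
      _ = 1 / C := rpow_one _
  calc C * x ^ (-γ) * N ^ γ = C * (N / x) ^ γ := by
        rw [div_rpow hN.le hx0.le, rpow_neg hx0.le]; ring
    _ ≤ C * (1 / C) := by gcongr
    _ = 1 := by field_simp

lemma rpow_mul_rpow_one_sub_le {N J γ : ℝ} (hγ : 1 ≤ γ) (hN : 0 < N) (hJ : N ≤ J) :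
    N ^ γ * J ^ (1 - γ) ≤ N :=
  calc N ^ γ * J ^ (1 - γ) ≤ N ^ γ * N ^ (1 - γ) :=
        mul_le_mul_of_nonneg_left (rpow_le_rpow_of_nonpos hN hJ (by linarith)) (by positivity)
    _ = N := by rw [← rpow_add hN]; simp

lemma sum_div_sq_add_le {lam : ℕ → ℝ} {M : ℕ} {C N γ θ₁ θ₂ m : ℝ} (hγ : 1 < γ) (hC : 0 ≤ C)
    (hN : 0 < N) (hm : 0 < m) (h₁ : m ≤ θ₁) (h₂ : m ≤ θ₂) (hlam0 : ∀ j ∈ Icc 1 M, 0 ≤ lam j)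
    (hlam : ∀ j ∈ Icc 1 M, lam j ≤ C * (j : ℝ) ^ (-γ) * N ^ γ) :
    ∑ j ∈ Icc 1 M, lam j / (θ₁ * lam j + θ₂) ^ 2 ≤ (N + 1) / m ^ 2 + C * N / (m ^ 2 * (γ - 1)) := by
  set J := ⌊N⌋₊ + 1
  have hNJ : N ≤ J := (Nat.lt_floor_add_one N).le.trans (by simp [J])
  have hJN : (J : ℝ) ≤ N + 1 := by simpa [J] using Nat.floor_le hN.le
  have hsum := sum_Icc_le_head_add_tail (f := fun j => lam j / (θ₁ * lam j + θ₂) ^ 2)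
    (A := 1 / m ^ 2) (B := C * N ^ γ / m ^ 2) (J := J) hγ (by positivity) (by positivity)
    (Nat.succ_pos _)
    (fun j hj => div_sq_add_le_one_div_sq hm h₁ h₂ (hlam0 j hj))
    (fun j hj => (div_sq_add_le_div_sq hm (hm.le.trans h₁) h₂ (hlam0 j hj)).trans <| by
      rw [div_mul_eq_mul_div, mul_right_comm]; gcongr; exact hlam j hj)
  refine hsum.trans ?_
  have htail : N ^ γ * (J : ℝ) ^ (1 - γ) ≤ N := rpow_mul_rpow_one_sub_le hγ.le hN hNJ
  have hγ1 : 0 < γ - 1 := by linarith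
  calc (J : ℝ) * (1 / m ^ 2) + C * N ^ γ / m ^ 2 * ((J : ℝ) ^ (1 - γ) / (γ - 1))
      = J / m ^ 2 + C * (N ^ γ * (J : ℝ) ^ (1 - γ)) / (m ^ 2 * (γ - 1)) := by field_simp
    _ ≤ (N + 1) / m ^ 2 + C * N / (m ^ 2 * (γ - 1)) := by gcongr

lemma sub_div_le_sum_one_div_sq {lam : ℕ → ℝ} {M : ℕ} {C N γ θ₁ θ₂ Θ : ℝ} (hγ : 1 ≤ γ)
    (hC : 1 ≤ C) (hN : 0 < N) (h₁ : 0 ≤ θ₁) (h₁' : θ₁ ≤ Θ) (h₂ : 0 < θ₂) (h₂' : θ₂ ≤ Θ)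
    (hlam0 : ∀ j ∈ Icc 1 M, 0 ≤ lam j)
    (hlam : ∀ j ∈ Icc 1 M, lam j ≤ C * (j : ℝ) ^ (-γ) * N ^ γ) :
    ((M : ℝ) - C * N) / (4 * Θ ^ 2) ≤ ∑ j ∈ Icc 1 M, 1 / (θ₁ * lam j + θ₂) ^ 2 := by
  rw [div_eq_mul_one_div]
  refine sub_mul_le_sum_Icc (by positivity) (by positivity)
    (fun j hj => by have := hlam0 j hj; positivity) fun j hj hCN => ?_
  exact one_div_four_mul_sq_le h₁ h₁' h₂ h₂' (hlam0 j hj)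
    ((hlam j hj).trans (mul_rpow_neg_mul_rpow_le_one hC hγ hN hCN))

lemma four_mul_sq_sub_six_mul_sub_three_pos {b : ℝ} (hb : (3 + √21) / 4 < b) :
    0 < 4 * b ^ 2 - 6 * b - 3 := by
  have h21 : √21 ^ 2 = 21 := sq_sqrt (by norm_num)
  nlinarith [sqrt_nonneg 21]

lemma neg_sq_le_sub_mul_sub {lo hi a a' c c' : ℝ} (ha : a ∈ Set.Icc lo hi)
    (ha' : a' ∈ Set.Icc lo hi) (hc : c ∈ Set.Icc lo hi) (hc' : c' ∈ Set.Icc lo hi) :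
    -(hi - lo) ^ 2 ≤ (a - a') * (c - c') := by
  have h1 : |a - a'| ≤ hi - lo := abs_sub_le_of_le_of_le ha.1 ha.2 ha'.1 ha'.2
  have h2 : |c - c'| ≤ hi - lo := abs_sub_le_of_le_of_le hc.1 hc.2 hc'.1 hc'.2
  calc -(hi - lo) ^ 2 ≤ -(|a - a'| * |c - c'|) := by
        rw [sq]; gcongr; exact (abs_nonneg _).trans h1
    _ ≤ (a - a') * (c - c') := by rw [← abs_mul]; exact neg_abs_le _

lemma rpow_rpow_eq_rpow_one_add_half {x b α : ℝ} (hx : 0 ≤ x) (hb : 3 / 4 < b) :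
    (x ^ ((2 + α) * (4 * b + 3) / (4 * b * (2 * b - 1)))) ^ (2 * b * (2 * b - 1) / (4 * b + 3))
      = x ^ (1 + α / 2) := by
  have h4b : 4 * b + 3 ≠ 0 := by linarith
  have h2b : 2 * b - 1 ≠ 0 := by linarith
  rw [← rpow_mul hx]; congr 1; field_simp; ring

lemma mul_sq_sub_le_add_div_mul {p q S₁ S₂ B X Θ D K : ℝ} (hK : 0 < K) (hΘ : 0 < Θ)
    (hS₁0 : 0 ≤ S₁) (hS₁ : S₁ ≤ B) (hS₂ : X / (4 * Θ ^ 2) ≤ S₂) (hpq : -D ^ 2 ≤ p * q) :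
    X / (8 * Θ ^ 2 * K) * q ^ 2 - D ^ 2 / (2 * K) * B ≤ (p * S₁ + q * S₂) / (2 * K) * q := by
  have hnum : q ^ 2 * (X / (4 * Θ ^ 2)) - D ^ 2 * B ≤ p * q * S₁ + q ^ 2 * S₂ := by
    nlinarith [mul_le_mul_of_nonneg_left hS₂ (sq_nonneg q),
      mul_le_mul_of_nonneg_left hS₁ (sq_nonneg D), mul_le_mul_of_nonneg_right hpq hS₁0]
  calc X / (8 * Θ ^ 2 * K) * q ^ 2 - D ^ 2 / (2 * K) * B
      = (q ^ 2 * (X / (4 * Θ ^ 2)) - D ^ 2 * B) / (2 * K) := by field_simp; ring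
    _ ≤ (p * q * S₁ + q ^ 2 * S₂) / (2 * K) := by gcongr
    _ = (p * S₁ + q * S₂) / (2 * K) * q := by ring

theorem stmt_12_general (M : ℕ) (hM : 1 ≤ M) (b α C θmin θmax θ₁ θ₂ θ₁s θ₂s : ℝ)
    (hb : (3 + Real.sqrt 21) / 4 < b) (hC : 1 ≤ C) (hθmin : 0 < θmin)
    (h1 : θmin ≤ θ₁) (h1' : θ₁ ≤ θmax) (h2 : θmin ≤ θ₂) (h2' : θ₂ ≤ θmax)
    (h3 : θmin ≤ θ₁s) (h3' : θ₁s ≤ θmax) (h4 : θmin ≤ θ₂s) (h4' : θ₂s ≤ θmax)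
    (lam : ℕ → ℝ) (hlam0 : ∀ j ∈ Finset.Icc 1 M, 0 ≤ lam j)
    (hlam : ∀ j ∈ Finset.Icc 1 M,
      lam j ≤ C * (j : ℝ) ^ (-(2 * b * (2 * b - 1)) / (4 * b + 3)) *
        (M : ℝ) ^ (1 + α / 2))
    (ρ S₁₂ S₂₂ g₂ : ℝ)
    (hρ : ρ = (2 + α) * (4 * b + 3) / (4 * b * (2 * b - 1)))
    (hS₁₂ : S₁₂ = ∑ j ∈ Finset.Icc 1 M, lam j / (θ₁ * lam j + θ₂) ^ 2)
    (hS₂₂ : S₂₂ = ∑ j ∈ Finset.Icc 1 M, 1 / (θ₁ * lam j + θ₂) ^ 2)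
    (hg₂ : g₂ = ((θ₁ - θ₁s) * S₁₂ + (θ₂ - θ₂s) * S₂₂) / (2 * M)) :
    g₂ * (θ₂ - θ₂s) ≥
      ((M : ℝ) - C * (M : ℝ) ^ ρ) / (8 * θmax ^ 2 * M) * (θ₂ - θ₂s) ^ 2 -
        (θmax - θmin) ^ 2 / (2 * M) *
          (((M : ℝ) ^ ρ + 1) / θmin ^ 2 +
            C * (4 * b + 3) * (M : ℝ) ^ ρ / (θmin ^ 2 * (4 * b ^ 2 - 6 * b - 3))) := by
  have hq := four_mul_sq_sub_six_mul_sub_three_pos hb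
  have hb0 : 3 / 4 < b := by linarith [sqrt_nonneg 21]
  set γ := 2 * b * (2 * b - 1) / (4 * b + 3) with hγdef
  have hγ1 : γ - 1 = (4 * b ^ 2 - 6 * b - 3) / (4 * b + 3) := by rw [hγdef]; field_simp; ring
  have hγ : 1 < γ := by linarith [div_pos hq (by linarith : (0 : ℝ) < 4 * b + 3)]
  have hM0 : (0 : ℝ) < M := by exact_mod_cast hM
  have hN : 0 < (M : ℝ) ^ ρ := by positivity
  have hlam' : ∀ j ∈ Icc 1 M, lam j ≤ C * (j : ℝ) ^ (-γ) * ((M : ℝ) ^ ρ) ^ γ := fun j hj => by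
    rw [hρ, rpow_rpow_eq_rpow_one_add_half hM0.le hb0]
    simpa only [neg_div] using hlam j hj
  have hS₁₂le := hS₁₂ ▸ sum_div_sq_add_le hγ (by linarith) hN hθmin h1 h2 hlam0 hlam'
  rw [hγ1, mul_div_assoc', div_div_eq_mul_div, mul_right_comm C] at hS₁₂le
  have hS₁₂0 : 0 ≤ S₁₂ := hS₁₂ ▸ sum_nonneg fun j hj => div_nonneg (hlam0 j hj) (sq_nonneg _)
  have hS₂₂ge := hS₂₂ ▸ sub_div_le_sum_one_div_sq hγ.le hC hN (by linarith) h1' (by linarith)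
    h2' hlam0 hlam'
  rw [ge_iff_le, hg₂]
  exact mul_sq_sub_le_add_div_mul hM0 (by linarith) hS₁₂0 hS₁₂le hS₂₂ge
    (neg_sq_le_sub_mul_sub ⟨h1, h1'⟩ ⟨h3, h3'⟩ ⟨h2, h2'⟩ ⟨h4, h4'⟩)

theorem stmt_12 (M : ℕ) (hM : 1 ≤ M) (b α C θmin θmax θ₁ θ₂ θ₁s θ₂s : ℝ)
    (hb : (3 + Real.sqrt 21) / 4 < b) (hα : 0 < α) (hC : 1 ≤ C) (hθmin : 0 < θmin)
    (h1 : θmin ≤ θ₁) (h1' : θ₁ ≤ θmax) (h2 : θmin ≤ θ₂) (h2' : θ₂ ≤ θmax)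
    (h3 : θmin ≤ θ₁s) (h3' : θ₁s ≤ θmax) (h4 : θmin ≤ θ₂s) (h4' : θ₂s ≤ θmax)
    (lam : ℕ → ℝ) (hlam0 : ∀ j ∈ Finset.Icc 1 M, 0 ≤ lam j)
    (hlam : ∀ j ∈ Finset.Icc 1 M,
      lam j ≤ C * (j : ℝ) ^ (-(2 * b * (2 * b - 1)) / (4 * b + 3)) *
        (M : ℝ) ^ (1 + α / 2))
    (ρ S₁₂ S₂₂ g₂ : ℝ)
    (hρ : ρ = (2 + α) * (4 * b + 3) / (4 * b * (2 * b - 1)))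
    (hS₁₂ : S₁₂ = ∑ j ∈ Finset.Icc 1 M, lam j / (θ₁ * lam j + θ₂) ^ 2)
    (hS₂₂ : S₂₂ = ∑ j ∈ Finset.Icc 1 M, 1 / (θ₁ * lam j + θ₂) ^ 2)
    (hg₂ : g₂ = ((θ₁ - θ₁s) * S₁₂ + (θ₂ - θ₂s) * S₂₂) / (2 * M)) :
    g₂ * (θ₂ - θ₂s) ≥
      ((M : ℝ) - C * (M : ℝ) ^ ρ) / (8 * θmax ^ 2 * M) * (θ₂ - θ₂s) ^ 2 -
        (θmax - θmin) ^ 2 / (2 * M) *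
          (((M : ℝ) ^ ρ + 1) / θmin ^ 2 +
            C * (4 * b + 3) * (M : ℝ) ^ ρ / (θmin ^ 2 * (4 * b ^ 2 - 6 * b - 3))) :=
  stmt_12_general M hM b α C θmin θmax θ₁ θ₂ θ₁s θ₂s hb hC hθmin h1 h1' h2 h2' h3 h3' h4 h4' lam
    hlam0 hlam ρ S₁₂ S₂₂ g₂ hρ hS₁₂ hS₂₂ hg₂
end
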